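/- arXiv:1809.08938 — 6 statements merged into one kernel-verified Lean document; each statement's English description precedes it below -/
import Mathlib

section
/- Let N : ℤ⁺ → ℚ be any function and let W : ℤ⁺ × ℤ^{≥0} → ℚ satisfy W(1,0) = W(1,1) = 1 together with recursion (I) at every (d,l) with d ≥ 2, l ≥ 1, 3d−2l ≥ 2, and recursion (II) at every (d,l) with d ≥ 2, l ≥ 2. Then for every integer d ≥ 2: W(d,0) = Σ_{d₁,d₂ ≥ 1, d₁+d₂=d} ( d₁·C(3d−3, 3d₁−2) − (d₂+1)·C(3d−3, 3d₁−3) ) · W(d₁,0)·W(d₂+1,1). -/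
open Finset

/-- Binomial coefficient `C(n,k)` as a rational number, with the convention that
`C(n,k) = 0` whenever `k < 0` or `k > n`. -/
def binom (n k : ℤ) : ℚ :=
  if 0 ≤ k ∧ k ≤ n then (n.toNat.choose k.toNat : ℚ) else 0

/-- Kontsevich's recursion for the genus 0 Gromov-Witten invariants of `ℙ²`. -/
def KontsevichRec (N : ℕ → ℚ) : Prop :=
  ∀ d : ℕ, 2 ≤ d →
    N d = (1 / (6 * ((d : ℚ) - 1))) *
      ∑ d₁ ∈ Finset.Ico 1 d,
        (((d₁ : ℚ) * ((d - d₁ : ℕ) : ℚ)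
            - 2 * ((d₁ : ℚ) - ((d - d₁ : ℕ) : ℚ)) ^ 2 / (3 * (d : ℚ) - 2))
          * binom (3 * (d : ℤ) - 2) (3 * (d₁ : ℤ) - 1)
          * (d₁ : ℚ) * ((d - d₁ : ℕ) : ℚ) * N d₁ * N (d - d₁))

/-- Pairs `(d₀, d')` of positive integers with `d₀ + 2d' = d`. -/
def pairsHalf (d : ℕ) : Finset (ℕ × ℕ) :=
  (Finset.range (d + 1) ×ˢ Finset.range (d + 1)).filter
    fun p => 1 ≤ p.1 ∧ 1 ≤ p.2 ∧ p.1 + 2 * p.2 = d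

/-- Pairs `(d₁, d₂)` of positive integers with `d₁ + d₂ = d`. -/
def pairsSum (d : ℕ) : Finset (ℕ × ℕ) :=
  (Finset.HasAntidiagonal.antidiagonal d).filter fun p => 1 ≤ p.1 ∧ 1 ≤ p.2

/-- The term `T₀(d,l) = −(−2)^{3d/2−4} d² N(d/2)` if `d` is even and `2l = 3d−2`,
and `0` otherwise; the integer power of `−2` is taken in `ℚ`. -/
def T0 (N : ℕ → ℚ) (d l : ℕ) : ℚ :=
  if Even d ∧ 2 * l + 2 = 3 * d then
    -((-2 : ℚ) ^ (3 * (d : ℤ) / 2 - 4)) * (d : ℚ) ^ 2 * N (d / 2)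
  else 0

/-- Solomon's recursion (I) for the Welschinger invariants of `(ℙ²,τ₂)`. -/
def RecI (N : ℕ → ℚ) (W : ℕ → ℕ → ℚ) (d l : ℕ) : Prop :=
  W d l = T0 N d l
    + ∑ p ∈ pairsHalf d,
        (-2 : ℚ) ^ (3 * p.2 - 1) * (p.1 : ℚ) * (p.2 : ℚ) ^ 3
          * binom ((l : ℤ) - 1) (3 * (p.2 : ℤ) - 1) * N p.2 * W p.1 (l - 3 * p.2)
    + ∑ q ∈ pairsSum d, ∑ r ∈ Finset.HasAntidiagonal.antidiagonal (l - 1),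
        binom ((l : ℤ) - 1) (r.1 : ℤ)
          * ((q.1 : ℚ) * (q.2 : ℚ)
                * binom (3 * (d : ℤ) - 2 * (l : ℤ) - 2) (3 * (q.1 : ℤ) - 2 * (r.1 : ℤ) - 2)
              - (q.1 : ℚ) ^ 2
                * binom (3 * (d : ℤ) - 2 * (l : ℤ) - 2) (3 * (q.1 : ℤ) - 2 * (r.1 : ℤ) - 1))
          * W q.1 r.1 * W q.2 r.2

/-- Solomon's recursion (II) for the Welschinger invariants of `(ℙ²,τ₂)`. -/
def RecII (N : ℕ → ℚ) (W : ℕ → ℕ → ℚ) (d l : ℕ) : Prop :=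
  W d l =
    ∑ p ∈ pairsHalf d,
        (-2 : ℚ) ^ (3 * p.2 - 2) * (p.1 : ℚ) * (p.2 : ℚ) ^ 2
          * ((p.1 : ℚ) * binom ((l : ℤ) - 2) (3 * (p.2 : ℤ) - 2)
              - 2 * (p.2 : ℚ) * binom ((l : ℤ) - 2) (3 * (p.2 : ℤ) - 1))
          * N p.2 * W p.1 (l - 3 * p.2)
    + ∑ q ∈ pairsSum d, ∑ r ∈ Finset.HasAntidiagonal.antidiagonal (l - 2),
        binom ((l : ℤ) - 2) (r.1 : ℤ)
          * ((q.1 : ℚ) * (q.2 : ℚ)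
                * binom (3 * (d : ℤ) - 2 * (l : ℤ) - 1) (3 * (q.1 : ℤ) - 2 * (r.1 : ℤ) - 2)
              - (q.1 : ℚ) ^ 2
                * binom (3 * (d : ℤ) - 2 * (l : ℤ) - 1) (3 * (q.1 : ℤ) - 2 * (r.1 : ℤ) - 1))
          * W q.1 r.1 * W q.2 (r.2 + 1)

/-- The formula expressing the purely real invariant `W(d,0)` obtained by taking
the difference between the two recursions for `W(d+1,2)`. -/
def SolFormula (W : ℕ → ℕ → ℚ) (d : ℕ) : Prop :=
  W d 0 = ∑ q ∈ pairsSum d,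
    ((q.1 : ℚ) * binom (3 * (d : ℤ) - 3) (3 * (q.1 : ℤ) - 2)
      - ((q.2 : ℚ) + 1) * binom (3 * (d : ℤ) - 3) (3 * (q.1 : ℤ) - 3))
    * W q.1 0 * W (q.2 + 1) 1

/-!
At `(d + 1, 2)` neither recursion sees the terms involving `N`: their binomial
coefficients `C(1, 3d' - 1)`, `C(0, 3d' - 2)`, `C(0, 3d' - 1)` vanish. After the symmetry
`C(n, k) = C(n, n - k)` moves the `W(d₁,1) W(d₂,0)` terms of (I) to `W(d₂,0) W(d₁,1)`, both
recursions express `W(d + 1, 2)` as a combination of the products `W(d₁,0) W(d₂,1)` with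
`d₁ + d₂ = d + 1`. By Pascal's rule the difference of the coefficients is
`(d + 1) (d₁ C(3d-3, 3d₁-2) - d₂ C(3d-3, 3d₁-3))`, so this combination vanishes. Its term
`(d₁, d₂) = (d, 1)` is `-W(d,0) W(1,1) = -W(d,0)`, and the others give the formula.
-/

lemma binom_of_lt {n k : ℤ} (h : n < k) : binom n k = 0 := by
  simp only [binom, if_neg (by omega : ¬(0 ≤ k ∧ k ≤ n))]

lemma binom_of_neg {n k : ℤ} (h : k < 0) : binom n k = 0 := by
  simp only [binom, if_neg (by omega : ¬(0 ≤ k ∧ k ≤ n))]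

lemma binom_zero {n : ℤ} (h : 0 ≤ n) : binom n 0 = 1 := by
  simp [binom, h]

lemma binom_self {n : ℤ} (h : 0 ≤ n) : binom n n = 1 := by
  simp [binom, h]

lemma binom_sub (n k : ℤ) : binom n (n - k) = binom n k := by
  by_cases hk : 0 ≤ k ∧ k ≤ n
  · rw [binom, binom, if_pos hk, if_pos ⟨by omega, by omega⟩,
      show (n - k).toNat = n.toNat - k.toNat by omega, Nat.choose_symm (by omega)]
  · rcases (by omega : k < 0 ∨ n < k) with h | h
    · rw [binom_of_neg h, binom_of_lt (by omega)]
    · rw [binom_of_lt h, binom_of_neg (by omega)]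

lemma binom_succ {n : ℤ} (hn : 0 ≤ n) (k : ℤ) :
    binom (n + 1) k = binom n k + binom n (k - 1) := by
  rcases (by omega : k < 0 ∨ k = 0 ∨ (1 ≤ k ∧ k ≤ n) ∨ k = n + 1 ∨ n + 1 < k) with
    h | rfl | h | rfl | h
  · rw [binom_of_neg h, binom_of_neg h, binom_of_neg (by omega), add_zero]
  · rw [binom_zero (by omega), binom_zero hn, binom_of_neg (by omega), add_zero]
  · rw [binom, binom, binom, if_pos ⟨by omega, by omega⟩, if_pos ⟨by omega, by omega⟩,
      if_pos ⟨by omega, by omega⟩, show (n + 1).toNat = n.toNat + 1 by omega,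
      show k.toNat = (k - 1).toNat + 1 by omega, Nat.choose_succ_succ, Nat.cast_add, add_comm]
  · rw [binom_self (by omega), binom_of_lt (by omega), add_sub_cancel_right, binom_self hn,
      zero_add]
  · rw [binom_of_lt h, binom_of_lt (by omega), binom_of_lt (by omega), add_zero]

lemma binom_pascal_combination {n : ℤ} (hn : 0 ≤ n) (k : ℤ) (a b : ℚ) :
    (a * b * binom n k - a ^ 2 * binom n (k + 1)) + (a * b * binom n k - b ^ 2 * binom n (k - 1))
      - (a * b * binom (n + 1) k - a ^ 2 * binom (n + 1) (k + 1))
      = (a + b) * (a * binom n k - b * binom n (k - 1)) := by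
  rw [binom_succ hn, binom_succ hn, add_sub_cancel_right]
  ring

lemma mem_pairsSum {m : ℕ} {q : ℕ × ℕ} :
    q ∈ pairsSum m ↔ q.1 + q.2 = m ∧ 1 ≤ q.1 ∧ 1 ≤ q.2 := by
  simp [pairsSum, Finset.HasAntidiagonal.mem_antidiagonal]

lemma sum_pairsSum_swap {M : Type*} [AddCommMonoid M] (m : ℕ) (f : ℕ × ℕ → M) :
    ∑ q ∈ pairsSum m, f q.swap = ∑ q ∈ pairsSum m, f q :=
  Finset.sum_equiv (Equiv.prodComm ℕ ℕ) (fun q => by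
    simp only [mem_pairsSum, Equiv.prodComm_apply, Prod.fst_swap, Prod.snd_swap]; omega)
    (fun _ _ => rfl)

lemma sum_pairsSum_succ {M : Type*} [AddCommMonoid M] {m : ℕ} (hm : 1 ≤ m) (f : ℕ × ℕ → M) :
    ∑ q ∈ pairsSum (m + 1), f q = f (m, 1) + ∑ q ∈ pairsSum m, f (q.1, q.2 + 1) := by
  obtain ⟨m, rfl⟩ := Nat.exists_eq_add_of_le' hm
  simp [pairsSum, Finset.sum_filter, Finset.Nat.sum_antidiagonal_succ']

section Solomon

variable {N : ℕ → ℚ} {W : ℕ → ℕ → ℚ} {d : ℕ}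

lemma recI_at_two (hd : 2 ≤ d) (h : RecI N W (d + 1) 2) :
    W (d + 1) 2 = ∑ q ∈ pairsSum (d + 1),
      (((q.1 : ℚ) * q.2 * binom (3 * d - 3) (3 * q.1 - 2)
          - (q.1 : ℚ) ^ 2 * binom (3 * d - 3) (3 * q.1 - 1)) * W q.1 0 * W q.2 1
        + ((q.1 : ℚ) * q.2 * binom (3 * d - 3) (3 * q.1 - 4)
          - (q.1 : ℚ) ^ 2 * binom (3 * d - 3) (3 * q.1 - 3)) * W q.1 1 * W q.2 0) := by
  have hT0 : T0 N (d + 1) 2 = 0 := if_neg fun h => by omega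
  have hHalf : ∀ p ∈ pairsHalf (d + 1), binom ((2 : ℕ) - 1) (3 * (p.2 : ℤ) - 1) = 0 := by
    intro p hp
    simp only [pairsHalf, Finset.mem_filter] at hp
    exact binom_of_lt (by omega)
  rw [h, hT0, zero_add, Finset.sum_eq_zero fun p hp => by rw [hHalf p hp]; ring, zero_add]
  refine Finset.sum_congr rfl fun q _ => ?_
  rw [show Finset.HasAntidiagonal.antidiagonal (2 - 1) = {((0 : ℕ), (1 : ℕ)), (1, 0)} by decide,
    Finset.sum_pair (by decide)]
  push_cast
  rw [binom_zero (by norm_num), binom_self (by norm_num)]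
  ring_nf

lemma recII_at_two (h : RecII N W (d + 1) 2) :
    W (d + 1) 2 = ∑ q ∈ pairsSum (d + 1),
      ((q.1 : ℚ) * q.2 * binom (3 * d - 3 + 1) (3 * q.1 - 2)
        - (q.1 : ℚ) ^ 2 * binom (3 * d - 3 + 1) (3 * q.1 - 1)) * W q.1 0 * W q.2 1 := by
  have hHalf : ∀ p ∈ pairsHalf (d + 1), ∀ j : ℤ, j ≤ 2 →
      binom ((2 : ℕ) - 2) (3 * (p.2 : ℤ) - j) = 0 := by
    intro p hp j hj
    simp only [pairsHalf, Finset.mem_filter] at hp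
    exact binom_of_lt (by omega)
  rw [h, Finset.sum_eq_zero fun p hp => by
    rw [hHalf p hp 1 (by norm_num), hHalf p hp 2 le_rfl]; ring, zero_add]
  refine Finset.sum_congr rfl fun q _ => ?_
  rw [show Finset.HasAntidiagonal.antidiagonal (2 - 2) = {((0 : ℕ), (0 : ℕ))} by decide,
    Finset.sum_singleton]
  push_cast
  rw [binom_zero (by norm_num)]
  ring_nf

lemma sum_recI_sub_recII_eq_zero (hd : 2 ≤ d) (hI : RecI N W (d + 1) 2)
    (hII : RecII N W (d + 1) 2) :
    ∑ q ∈ pairsSum (d + 1),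
      ((q.1 : ℚ) * binom (3 * d - 3) (3 * q.1 - 2)
        - (q.2 : ℚ) * binom (3 * d - 3) (3 * q.1 - 3)) * W q.1 0 * W q.2 1 = 0 := by
  have hn : (0 : ℤ) ≤ 3 * d - 3 := by omega
  have hswap : ∑ q ∈ pairsSum (d + 1),
      ((q.1 : ℚ) * q.2 * binom (3 * d - 3) (3 * q.1 - 4)
        - (q.1 : ℚ) ^ 2 * binom (3 * d - 3) (3 * q.1 - 3)) * W q.1 1 * W q.2 0
      = ∑ q ∈ pairsSum (d + 1),
      ((q.1 : ℚ) * q.2 * binom (3 * d - 3) (3 * q.1 - 2)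
        - (q.2 : ℚ) ^ 2 * binom (3 * d - 3) (3 * q.1 - 3)) * W q.1 0 * W q.2 1 := by
    rw [← sum_pairsSum_swap]
    refine Finset.sum_congr rfl fun q hq => ?_
    have hsum : (q.1 : ℤ) + q.2 = d + 1 := by exact_mod_cast (mem_pairsSum.mp hq).1
    rw [Prod.fst_swap, Prod.snd_swap,
      show 3 * (q.2 : ℤ) - 4 = (3 * d - 3) - (3 * q.1 - 2) by omega,
      show 3 * (q.2 : ℤ) - 3 = (3 * d - 3) - (3 * q.1 - 3) by omega, binom_sub, binom_sub]
    ring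
  have hdiff := (recI_at_two hd hI).symm.trans (recII_at_two hII)
  rw [Finset.sum_add_distrib, hswap, ← Finset.sum_add_distrib, ← sub_eq_zero,
    ← Finset.sum_sub_distrib] at hdiff
  refine (mul_eq_zero.mp ?_).resolve_left (by positivity : ((d : ℚ) + 1) ≠ 0)
  rw [Finset.mul_sum, ← hdiff]
  refine Finset.sum_congr rfl fun q hq => ?_
  have hsum : (q.1 : ℚ) + q.2 = d + 1 := by exact_mod_cast (mem_pairsSum.mp hq).1
  have key := binom_pascal_combination hn (3 * q.1 - 2) q.1 q.2
  rw [show (3 * q.1 - 2 + 1 : ℤ) = 3 * q.1 - 1 by ring,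
    show (3 * q.1 - 2 - 1 : ℤ) = 3 * q.1 - 3 by ring, hsum] at key
  linear_combination (W q.1 0 * W q.2 1) * key.symm

end Solomon

theorem stmt_2_general (N : ℕ → ℚ) (W : ℕ → ℕ → ℚ)
    (hW11 : W 1 1 = 1)
    (hI : ∀ d l : ℕ, 2 ≤ d → 1 ≤ l → 2 * l + 2 ≤ 3 * d → RecI N W d l)
    (hII : ∀ d l : ℕ, 2 ≤ d → 2 ≤ l → RecII N W d l) :
    ∀ d : ℕ, 2 ≤ d → SolFormula W d := by
  intro d hd
  have hvanish := sum_recI_sub_recII_eq_zero hd (hI (d + 1) 2 (by omega) (by omega) (by omega))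
    (hII (d + 1) 2 (by omega) le_rfl)
  rw [sum_pairsSum_succ (by omega), binom_of_lt (by omega), binom_self (by omega), hW11] at hvanish
  rw [SolFormula]
  push_cast at hvanish
  linear_combination -hvanish

/-- Solomon's relations imply the formula for the purely real Welschinger
invariants `W(d,0)` of `(ℙ²,τ₂)` for all `d ≥ 2`. -/
theorem stmt_2 (N : ℕ → ℚ) (W : ℕ → ℕ → ℚ)
    (hW10 : W 1 0 = 1) (hW11 : W 1 1 = 1)
    (hI : ∀ d l : ℕ, 2 ≤ d → 1 ≤ l → 2 * l + 2 ≤ 3 * d → RecI N W d l)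
    (hII : ∀ d l : ℕ, 2 ≤ d → 2 ≤ l → RecII N W d l) :
    ∀ d : ℕ, 2 ≤ d → SolFormula W d :=
  stmt_2_general N W hW11 hI hII
end

section
/- Let N : ℤ⁺ → ℚ be any function. Then there is at most one function W : ℤ⁺ × ℤ^{≥0} → ℚ such that: W(1,0) = W(1,1) = 1; W(d,l) = 0 whenever 2l > 3d−1; W satisfies recursion (I) at every (d,l) with d ≥ 2, l ≥ 1, 3d−2l ≥ 2; W satisfies recursion (II) at every (d,l) with d ≥ 2, l ≥ 2; and, for every d ≥ 2, W(d,0) = Σ_{d₁,d₂ ≥ 1, d₁+d₂=d} ( d₁·C(3d−3, 3d₁−2) − (d₂+1)·C(3d−3, 3d₁−3) ) · W(d₁,0)·W(d₂+1,1). That is, any two such functions agree everywhere. -/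
open Finset

/-- The full set of conditions on the Welschinger invariants `W(d,l)` of `(ℙ²,τ₂)`:
base cases, dimension vanishing, Solomon's recursions (I) and (II), and
the formula for `W(d,0)`. -/
def GoodW (N : ℕ → ℚ) (W : ℕ → ℕ → ℚ) : Prop :=
  W 1 0 = 1 ∧ W 1 1 = 1
    ∧ (∀ d l : ℕ, 1 ≤ d → 3 * d ≤ 2 * l → W d l = 0)
    ∧ (∀ d l : ℕ, 2 ≤ d → 1 ≤ l → 2 * l + 2 ≤ 3 * d → RecI N W d l)
    ∧ (∀ d l : ℕ, 2 ≤ d → 2 ≤ l → RecII N W d l)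
    ∧ (∀ d : ℕ, 2 ≤ d → SolFormula W d)

/-!
The right-hand sides of recursion (I) at `l = 1` and of recursion (II) involve `W` only in
degrees below `d`, so by strong induction on `d` they fix `W(d,l)` for `l ≥ 1`. The formula
for `W(d,0)` involves, besides lower degrees, only `W(d,1)`, which is already fixed.
-/

lemma mem_pairsHalf {d : ℕ} {p : ℕ × ℕ} :
    p ∈ pairsHalf d ↔ 1 ≤ p.1 ∧ 1 ≤ p.2 ∧ p.1 + 2 * p.2 = d := by
  simp only [pairsHalf, mem_filter, mem_product, mem_range]
  omega

lemma mem_pairsSum_s3 {d : ℕ} {p : ℕ × ℕ} :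
    p ∈ pairsSum d ↔ 1 ≤ p.1 ∧ 1 ≤ p.2 ∧ p.1 + p.2 = d := by
  simp only [pairsSum, mem_filter, HasAntidiagonal.mem_antidiagonal]
  tauto

section AgreeBelow

variable {N : ℕ → ℚ} {W W' : ℕ → ℕ → ℚ} {d : ℕ}

def AgreeBelow (W W' : ℕ → ℕ → ℚ) (d : ℕ) : Prop :=
  ∀ e < d, 1 ≤ e → ∀ l, W e l = W' e l

lemma AgreeBelow.pairsHalf_fst (h : AgreeBelow W W' d) {p : ℕ × ℕ} (hp : p ∈ pairsHalf d)
    (l : ℕ) : W p.1 l = W' p.1 l := by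
  obtain ⟨hp₁, hp₂, hpd⟩ := mem_pairsHalf.1 hp
  exact h p.1 (by omega) hp₁ l

lemma AgreeBelow.pairsSum_fst (h : AgreeBelow W W' d) {q : ℕ × ℕ} (hq : q ∈ pairsSum d)
    (l : ℕ) : W q.1 l = W' q.1 l := by
  obtain ⟨hq₁, hq₂, hqd⟩ := mem_pairsSum_s3.1 hq
  exact h q.1 (by omega) hq₁ l

lemma AgreeBelow.pairsSum_snd (h : AgreeBelow W W' d) {q : ℕ × ℕ} (hq : q ∈ pairsSum d)
    (l : ℕ) : W q.2 l = W' q.2 l := by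
  obtain ⟨hq₁, hq₂, hqd⟩ := mem_pairsSum_s3.1 hq
  exact h q.2 (by omega) hq₂ l

lemma RecI.eq_of_agreeBelow {l : ℕ} (hW : RecI N W d l) (hW' : RecI N W' d l)
    (h : AgreeBelow W W' d) : W d l = W' d l := by
  rw [hW, hW']
  congr 1
  · congr 1
    refine sum_congr rfl fun p hp => ?_
    rw [h.pairsHalf_fst hp]
  · refine sum_congr rfl fun q hq => sum_congr rfl fun r _ => ?_
    rw [h.pairsSum_fst hq, h.pairsSum_snd hq]

lemma RecII.eq_of_agreeBelow {l : ℕ} (hW : RecII N W d l) (hW' : RecII N W' d l)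
    (h : AgreeBelow W W' d) : W d l = W' d l := by
  rw [hW, hW']
  congr 1
  · refine sum_congr rfl fun p hp => ?_
    rw [h.pairsHalf_fst hp]
  · refine sum_congr rfl fun q hq => sum_congr rfl fun r _ => ?_
    rw [h.pairsSum_fst hq, h.pairsSum_snd hq]

lemma SolFormula.eq_of_agreeBelow (hW : SolFormula W d) (hW' : SolFormula W' d)
    (h : AgreeBelow W W' d) (h₁ : W d 1 = W' d 1) : W d 0 = W' d 0 := by
  rw [hW, hW']
  refine sum_congr rfl fun q hq => ?_
  obtain ⟨hq₁, hq₂, hqd⟩ := mem_pairsSum_s3.1 hq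
  rw [h.pairsSum_fst hq]
  rcases (show q.2 + 1 ≤ d by omega).eq_or_lt with hd | hd
  · rw [hd, h₁]
  · rw [h (q.2 + 1) hd (by omega)]

end AgreeBelow

lemma GoodW.eq_of_degree_one {N : ℕ → ℚ} {W W' : ℕ → ℕ → ℚ}
    (hW : GoodW N W) (hW' : GoodW N W') (l : ℕ) : W 1 l = W' 1 l := by
  obtain ⟨h₀, h₁, hvan, -⟩ := hW
  obtain ⟨h₀', h₁', hvan', -⟩ := hW'
  match l with
  | 0 => rw [h₀, h₀']
  | 1 => rw [h₁, h₁']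
  | l + 2 => rw [hvan 1 (l + 2) le_rfl (by omega), hvan' 1 (l + 2) le_rfl (by omega)]

lemma GoodW.eq_of_agreeBelow {N : ℕ → ℚ} {W W' : ℕ → ℕ → ℚ} {d : ℕ}
    (hW : GoodW N W) (hW' : GoodW N W') (hd : 2 ≤ d) (h : AgreeBelow W W' d) (l : ℕ) :
    W d l = W' d l := by
  obtain ⟨-, -, -, hI, hII, hS⟩ := hW
  obtain ⟨-, -, -, hI', hII', hS'⟩ := hW'
  have h₁ : W d 1 = W' d 1 :=
    (hI d 1 hd le_rfl (by omega)).eq_of_agreeBelow (hI' d 1 hd le_rfl (by omega)) h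
  match l with
  | 0 => exact (hS d hd).eq_of_agreeBelow (hS' d hd) h h₁
  | 1 => exact h₁
  | l + 2 =>
    exact (hII d (l + 2) hd (by omega)).eq_of_agreeBelow (hII' d (l + 2) hd (by omega)) h

/-- There is at most one function `W` on `ℤ⁺ × ℤ^{≥0}` satisfying all the
conditions of `GoodW`. -/
theorem stmt_3 (N : ℕ → ℚ) (W W' : ℕ → ℕ → ℚ)
    (hW : GoodW N W) (hW' : GoodW N W') :
    ∀ d l : ℕ, 1 ≤ d → W d l = W' d l := by
  intro d
  induction d using Nat.strong_induction_on with
  | _ d ih =>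
    intro l hd
    rcases hd.eq_or_lt with rfl | hd
    · exact hW.eq_of_degree_one hW' l
    · exact hW.eq_of_agreeBelow hW' hd (fun e he he₁ l => ih e he l he₁) l
end

section
/- Let N : ℤ^{≥0} × ℤ^{≥0} → ℚ satisfy N(0,0) = 0, N(1,0) = N(0,1) = 1 and the ℙ¹×ℙ¹ WDVV recursion. Let W, defined on triples (a,b,l) of nonnegative integers with (a,b) ≠ (0,0), satisfy: W(a,b,l) = W(b,a,l); W(1,b,l) = 1 for 0 ≤ l ≤ b; W(a,0,l) = 0 for a ≥ 2; W(a,b,l) = 0 whenever 2l > 2(a+b)−1; recursion (τ1a) at every (a,b,l) with l ≥ 1 and a+b−l ≥ 1; and recursion (τ1b) at every (a,b) with a ≥ 2, b ≥ 1. Then W(2,2,0) = 8, W(2,2,1) = 6, W(2,2,2) = 4, W(2,2,3) = 2, W(2,3,0) = 48, W(2,4,0) = 256, W(3,3,0) = 1086, and W(4,4,0) = 819200. -/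
open Finset

/-- Quadruples `(a',b')` (recording `(a₀,b₀) = (a−2a', b−2b')`) with
`a₀ + 2a' = a`, `b₀ + 2b' = b`, `(a₀,b₀) ≠ (0,0)` and `(a',b') ≠ (0,0)`. -/
def quadHalf (a b : ℕ) : Finset (ℕ × ℕ) :=
  (Finset.range (a + 1) ×ˢ Finset.range (b + 1)).filter
    fun p => 2 * p.1 ≤ a ∧ 2 * p.2 ≤ b ∧ 1 ≤ p.1 + p.2
      ∧ 1 ≤ (a - 2 * p.1) + (b - 2 * p.2)

/-- Splittings `((a₁,a₂),(b₁,b₂))` with `a₁+a₂ = a`, `b₁+b₂ = b`,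
`(a₁,b₁) ≠ (0,0)` and `(a₂,b₂) ≠ (0,0)`. -/
def quadSum (a b : ℕ) : Finset ((ℕ × ℕ) × (ℕ × ℕ)) :=
  (Finset.HasAntidiagonal.antidiagonal a ×ˢ Finset.HasAntidiagonal.antidiagonal b).filter
    fun pq => 1 ≤ pq.1.1 + pq.2.1 ∧ 1 ≤ pq.1.2 + pq.2.2

/-- The term `T₀ = −2^{l−3} a b N(a/2,b/2)` if `a` and `b` are both even and
`l = a+b−1`, and `0` otherwise; the power `2^{l−3}` is taken in `ℚ`. -/
def T0pr (N : ℕ → ℕ → ℚ) (a b l : ℕ) : ℚ :=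
  if Even a ∧ Even b ∧ l + 1 = a + b then
    -((2 : ℚ) ^ ((l : ℤ) - 3)) * (a : ℚ) * (b : ℚ) * N (a / 2) (b / 2)
  else 0

/-- Recursion (τ1a) for the Welschinger invariants of `(ℙ¹×ℙ¹, τ₁,₁)`. -/
def RecT1a (N : ℕ → ℕ → ℚ) (W : ℕ → ℕ → ℕ → ℚ) (a b l : ℕ) : Prop :=
  W a b l = T0pr N a b l
    - ∑ p ∈ quadHalf a b,
        (2 : ℚ) ^ (2 * (p.1 + p.2) - 1) * (p.1 : ℚ) * (p.2 : ℚ)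
          * (((a - 2 * p.1 : ℕ) : ℚ) * (p.2 : ℚ) + ((b - 2 * p.2 : ℕ) : ℚ) * (p.1 : ℚ))
          * binom ((l : ℤ) - 1) (2 * ((p.1 : ℤ) + (p.2 : ℤ)) - 1)
          * N p.1 p.2 * W (a - 2 * p.1) (b - 2 * p.2) (l - 2 * (p.1 + p.2))
    + ∑ pq ∈ quadSum a b, ∑ r ∈ Finset.HasAntidiagonal.antidiagonal (l - 1),
        (pq.2.1 : ℚ) * binom ((l : ℤ) - 1) (r.1 : ℤ)
          * ((pq.1.2 : ℚ)
                * binom (2 * ((a : ℤ) + (b : ℤ)) - 2 * (l : ℤ) - 2)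
                    (2 * ((pq.1.1 : ℤ) + (pq.2.1 : ℤ)) - 2 * (r.1 : ℤ) - 2)
              - (pq.1.1 : ℚ)
                * binom (2 * ((a : ℤ) + (b : ℤ)) - 2 * (l : ℤ) - 2)
                    (2 * ((pq.1.1 : ℤ) + (pq.2.1 : ℤ)) - 2 * (r.1 : ℤ) - 1))
          * W pq.1.1 pq.2.1 r.1 * W pq.1.2 pq.2.2 r.2

/-- Recursion (τ1b) for the purely real Welschinger invariants of
`(ℙ¹×ℙ¹, τ₁,₁)`. -/
def RecT1b (W : ℕ → ℕ → ℕ → ℚ) (a b : ℕ) : Prop :=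
  W a b 0 = (1 / (2 * ((a : ℚ) - 1))) *
    ∑ pq ∈ (Finset.HasAntidiagonal.antidiagonal a ×ˢ Finset.HasAntidiagonal.antidiagonal (b + 1)).filter
        (fun pq => 1 ≤ pq.1.1 ∧ 1 ≤ pq.1.2 ∧ 1 ≤ pq.2.1 ∧ 1 ≤ pq.2.2),
      ((pq.2.1 : ℚ) * (pq.2.2 : ℚ)
            * binom (2 * ((a : ℤ) + (b : ℤ)) - 2)
                (2 * ((pq.1.1 : ℤ) + (pq.2.1 : ℤ)) - 2)
          - (pq.2.1 : ℚ) ^ 2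
            * binom (2 * ((a : ℤ) + (b : ℤ)) - 2)
                (2 * ((pq.1.1 : ℤ) + (pq.2.1 : ℤ)) - 1))
        * W pq.1.1 pq.2.1 0 * W pq.1.2 pq.2.2 0

/-- The conditions on the Welschinger invariants `W(a,b,l)` of `(ℙ¹×ℙ¹, τ₁,₁)`:
symmetry, base cases, dimension vanishing, and recursions (τ1a) and (τ1b). -/
def GoodWpr (N : ℕ → ℕ → ℚ) (W : ℕ → ℕ → ℕ → ℚ) : Prop :=
  (∀ a b l : ℕ, 1 ≤ a + b → W a b l = W b a l)
    ∧ (∀ b l : ℕ, l ≤ b → W 1 b l = 1)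
    ∧ (∀ a l : ℕ, 2 ≤ a → W a 0 l = 0)
    ∧ (∀ a b l : ℕ, 1 ≤ a + b → a + b ≤ l → W a b l = 0)
    ∧ (∀ a b l : ℕ, 1 ≤ l → l + 1 ≤ a + b → RecT1a N W a b l)
    ∧ (∀ a b : ℕ, 2 ≤ a → 1 ≤ b → RecT1b W a b)

/-- The complex WDVV recursion for the genus 0 Gromov-Witten invariants of `ℙ¹×ℙ¹`. -/
def QuadRec (N : ℕ → ℕ → ℚ) : Prop :=
  ∀ a b : ℕ, 2 ≤ a + b →
    N a b = (1 / 2) *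
      ∑ p ∈ Finset.HasAntidiagonal.antidiagonal a, ∑ q ∈ Finset.HasAntidiagonal.antidiagonal b,
        ((p.1 : ℚ) * (q.2 : ℚ) + (p.2 : ℚ) * (q.1 : ℚ)) * ((p.1 : ℚ) + (q.1 : ℚ))
          * (((p.2 : ℚ) + (q.2 : ℚ))
                * binom (2 * (a : ℤ) + 2 * (b : ℤ) - 4) (2 * (p.1 : ℤ) + 2 * (q.1 : ℤ) - 2)
              - ((p.1 : ℚ) + (q.1 : ℚ))
                * binom (2 * (a : ℤ) + 2 * (b : ℤ) - 4) (2 * (p.1 : ℤ) + 2 * (q.1 : ℤ) - 1))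
          * N p.1 q.1 * N p.2 q.2

/-! All eight values are forced by the recursions, evaluated from the base cases upwards.
(τ1b) expresses each purely real invariant `W(a,b,0)` through products of purely real invariants
of smaller bidegree. In (τ1a) for bidegree `(2,2)` the sum over `N(a',b')` vanishes: its terms
carry the factor `a'b'`, and `(a',b') = (1,1)` is excluded as it leaves `(a₀,b₀) = (0,0)`.
So `W(2,2,l)` comes from invariants of smaller bidegree and, for `l = 3`, from the term `T₀`,
which involves `N(1,1) = 1` (from WDVV). -/

theorem Int.toNat_ofNat (n : ℕ) [n.AtLeastTwo] :
    (no_index (OfNat.ofNat n : ℤ)).toNat = OfNat.ofNat n :=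
  rfl

theorem QuadRec.N_one_one {N : ℕ → ℕ → ℚ} (hN : QuadRec N) (h10 : N 1 0 = 1) (h01 : N 0 1 = 1) :
    N 1 1 = 1 := by
  refine (hN 1 1 le_rfl).trans ?_
  simp only [Finset.Nat.sum_antidiagonal_eq_sum_range_succ_mk, Finset.sum_range_succ,
    Finset.sum_range_zero]
  norm_num [binom, h10, h01]

section
variable {N : ℕ → ℕ → ℚ} {W : ℕ → ℕ → ℕ → ℚ}

theorem GoodWpr.symm (hW : GoodWpr N W) {a b : ℕ} (l : ℕ) (h : 1 ≤ a + b) :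
    W a b l = W b a l :=
  hW.1 a b l h

theorem GoodWpr.one_left (hW : GoodWpr N W) {b l : ℕ} (h : l ≤ b) : W 1 b l = 1 :=
  hW.2.1 b l h

theorem GoodWpr.one_right (hW : GoodWpr N W) {a l : ℕ} (h : l ≤ a) : W a 1 l = 1 :=
  (hW.symm l (by omega)).trans (hW.one_left h)

theorem GoodWpr.zero_right (hW : GoodWpr N W) {a : ℕ} (l : ℕ) (h : 2 ≤ a) : W a 0 l = 0 :=
  hW.2.2.1 a l h

theorem GoodWpr.eq_zero_of_le (hW : GoodWpr N W) {a b l : ℕ} (h : 1 ≤ a + b) (hl : a + b ≤ l) :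
    W a b l = 0 :=
  hW.2.2.2.1 a b l h hl

theorem GoodWpr.recT1a (hW : GoodWpr N W) {a b l : ℕ} (hl : 1 ≤ l) (h : l + 1 ≤ a + b) :
    RecT1a N W a b l :=
  hW.2.2.2.2.1 a b l hl h

theorem GoodWpr.recT1b (hW : GoodWpr N W) {a b : ℕ} (ha : 2 ≤ a) (hb : 1 ≤ b) : RecT1b W a b :=
  hW.2.2.2.2.2 a b ha hb

theorem GoodWpr.W_two_two_zero (hW : GoodWpr N W) : W 2 2 0 = 8 := by
  refine (hW.recT1b (a := 2) (b := 2) (by norm_num) (by norm_num)).trans ?_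
  simp only [Finset.sum_filter, Finset.sum_product,
    Finset.Nat.sum_antidiagonal_eq_sum_range_succ_mk, Finset.sum_range_succ, Finset.sum_range_zero]
  norm_num [binom, Int.toNat_ofNat, Nat.choose, hW.one_left]

theorem GoodWpr.W_two_three_zero (hW : GoodWpr N W) : W 2 3 0 = 48 := by
  refine (hW.recT1b (a := 2) (b := 3) (by norm_num) (by norm_num)).trans ?_
  simp only [Finset.sum_filter, Finset.sum_product,
    Finset.Nat.sum_antidiagonal_eq_sum_range_succ_mk, Finset.sum_range_succ, Finset.sum_range_zero]
  norm_num [binom, Int.toNat_ofNat, Nat.choose, hW.one_left]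

theorem GoodWpr.W_two_four_zero (hW : GoodWpr N W) : W 2 4 0 = 256 := by
  refine (hW.recT1b (a := 2) (b := 4) (by norm_num) (by norm_num)).trans ?_
  simp only [Finset.sum_filter, Finset.sum_product,
    Finset.Nat.sum_antidiagonal_eq_sum_range_succ_mk, Finset.sum_range_succ, Finset.sum_range_zero]
  norm_num [binom, Int.toNat_ofNat, Nat.choose, hW.one_left]

theorem GoodWpr.W_three_three_zero (hW : GoodWpr N W) : W 3 3 0 = 1086 := by
  refine (hW.recT1b (a := 3) (b := 3) (by norm_num) (by norm_num)).trans ?_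
  simp only [Finset.sum_filter, Finset.sum_product,
    Finset.Nat.sum_antidiagonal_eq_sum_range_succ_mk, Finset.sum_range_succ, Finset.sum_range_zero]
  norm_num [binom, Int.toNat_ofNat, Nat.choose, hW.one_left, hW.one_right, hW.W_two_two_zero,
    hW.W_two_three_zero]

theorem GoodWpr.W_three_four_zero (hW : GoodWpr N W) : W 3 4 0 = 18424 := by
  refine (hW.recT1b (a := 3) (b := 4) (by norm_num) (by norm_num)).trans ?_
  simp only [Finset.sum_filter, Finset.sum_product,
    Finset.Nat.sum_antidiagonal_eq_sum_range_succ_mk, Finset.sum_range_succ, Finset.sum_range_zero]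
  norm_num [binom, Int.toNat_ofNat, Nat.choose, hW.one_left, hW.one_right, hW.W_two_two_zero,
    hW.W_two_three_zero, hW.W_two_four_zero]

theorem GoodWpr.W_four_four_zero (hW : GoodWpr N W) : W 4 4 0 = 819200 := by
  refine (hW.recT1b (a := 4) (b := 4) (by norm_num) (by norm_num)).trans ?_
  simp only [Finset.sum_filter, Finset.sum_product,
    Finset.Nat.sum_antidiagonal_eq_sum_range_succ_mk, Finset.sum_range_succ, Finset.sum_range_zero]
  norm_num [binom, Int.toNat_ofNat, Nat.choose, hW.one_left, hW.one_right, hW.W_two_two_zero,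
    hW.W_two_three_zero, hW.W_two_four_zero, hW.W_three_three_zero, hW.W_three_four_zero,
    hW.symm 0 (show 1 ≤ 3 + 2 by norm_num)]

theorem GoodWpr.W_two_two_one (hW : GoodWpr N W) : W 2 2 1 = 6 := by
  refine (hW.recT1a (a := 2) (b := 2) (l := 1) (by norm_num) (by norm_num)).trans ?_
  simp only [quadHalf, quadSum, T0pr, Finset.sum_filter, Finset.sum_product,
    Finset.Nat.sum_antidiagonal_eq_sum_range_succ_mk, Finset.sum_range_succ, Finset.sum_range_zero]
  norm_num [binom, Int.toNat_ofNat, Nat.choose, hW.one_left, hW.one_right, hW.zero_right]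

theorem GoodWpr.W_two_two_two (hW : GoodWpr N W) : W 2 2 2 = 4 := by
  refine (hW.recT1a (a := 2) (b := 2) (l := 2) (by norm_num) (by norm_num)).trans ?_
  simp only [quadHalf, quadSum, T0pr, Finset.sum_filter, Finset.sum_product,
    Finset.Nat.sum_antidiagonal_eq_sum_range_succ_mk, Finset.sum_range_succ, Finset.sum_range_zero]
  norm_num [binom, Int.toNat_ofNat, hW.one_left, hW.one_right, hW.zero_right, hW.eq_zero_of_le]

theorem GoodWpr.W_two_two_three (hW : GoodWpr N W) (h11 : N 1 1 = 1) : W 2 2 3 = 2 := by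
  refine (hW.recT1a (a := 2) (b := 2) (l := 3) (by norm_num) (by norm_num)).trans ?_
  simp only [quadHalf, quadSum, T0pr, Finset.sum_filter, Finset.sum_product,
    Finset.Nat.sum_antidiagonal_eq_sum_range_succ_mk, Finset.sum_range_succ, Finset.sum_range_zero]
  norm_num [binom, Int.toNat_ofNat, Nat.choose, h11, hW.one_left, hW.one_right, hW.zero_right,
    hW.eq_zero_of_le]

end

theorem stmt_11_general (N : ℕ → ℕ → ℚ) (W : ℕ → ℕ → ℕ → ℚ)
    (h10 : N 1 0 = 1) (h01 : N 0 1 = 1) (hN : QuadRec N)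
    (hW : GoodWpr N W) :
    W 2 2 0 = 8 ∧ W 2 2 1 = 6 ∧ W 2 2 2 = 4 ∧ W 2 2 3 = 2
      ∧ W 2 3 0 = 48 ∧ W 2 4 0 = 256 ∧ W 3 3 0 = 1086 ∧ W 4 4 0 = 819200 :=
  ⟨hW.W_two_two_zero, hW.W_two_two_one, hW.W_two_two_two,
    hW.W_two_two_three (hN.N_one_one h10 h01), hW.W_two_three_zero, hW.W_two_four_zero,
    hW.W_three_three_zero, hW.W_four_four_zero⟩

/-- Low-degree values of the Welschinger invariants of `(ℙ¹×ℙ¹, τ₁,₁)`. -/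
theorem stmt_11 (N : ℕ → ℕ → ℚ) (W : ℕ → ℕ → ℕ → ℚ)
    (h00 : N 0 0 = 0) (h10 : N 1 0 = 1) (h01 : N 0 1 = 1) (hN : QuadRec N)
    (hW : GoodWpr N W) :
    W 2 2 0 = 8 ∧ W 2 2 1 = 6 ∧ W 2 2 2 = 4 ∧ W 2 2 3 = 2
      ∧ W 2 3 0 = 48 ∧ W 2 4 0 = 256 ∧ W 3 3 0 = 1086 ∧ W 4 4 0 = 819200 :=
  stmt_11_general N W h10 h01 hN hW
end

section
/- Fix an integer k ≥ 0 and let N^{ℙ²} : ℤ⁺ → ℚ be a given function. Then there is at most one collection of functions N^j : H_j → ℚ, for 0 ≤ j ≤ k, such that: N^0((d,())) = N^{ℙ²}(d) for all d ≥ 1; N^{j+1}((d,(c₁,…,c_j,0))) = N^j((d,(c₁,…,c_j))) for all 0 ≤ j < k and all (d,(c₁,…,c_j)) ∈ H_j; N^j(v) = 0 whenever ℓ(v) < 0; and the Göttsche–Pandharipande recursion R(i) holds at every v = (d,(c₁,…,c_j)) ∈ H_j with ℓ(v) ≥ 0 and every i ∈ {1,…,j} with cᵢ ≥ 1. That is,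 any two such collections coincide. -/
open Finset

/-- For `v = (d,(c₁,…,c_j))`, the number `ℓ(v) = 3d − 1 − (c₁ + ⋯ + c_j)`. -/
def ell {j : ℕ} (d : ℕ) (c : Fin j → ℕ) : ℤ :=
  3 * (d : ℤ) - 1 - ∑ i, (c i : ℤ)

/-- The Göttsche-Pandharipande recursion R(i) at `v = (d,c)` for the genus 0
Gromov-Witten invariants of the blowup of `ℙ²` at `j` points:
`d² cᵢ N(v) = (d² − (cᵢ−1)²) N(v−eᵢ) + ∑_{v₁+v₂ = v−eᵢ} ⟨v₁,v₂⟩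
(d₁d₂ c_{1,i} c_{2,i} − d₁² c_{2,i}²) C(ℓ(v), ℓ(v₁)) N(v₁) N(v₂)`. -/
def GPrec {j : ℕ} (Nj : ℕ → (Fin j → ℕ) → ℚ) (d : ℕ) (c : Fin j → ℕ) (i : Fin j) : Prop :=
  (d : ℚ) ^ 2 * (c i : ℚ) * Nj d c
    = ((d : ℚ) ^ 2 - ((c i : ℚ) - 1) ^ 2) * Nj d (Function.update c i (c i - 1))
      + ∑ d₁ ∈ Finset.Ico 1 d,
          ∑ c₁ ∈ Fintype.piFinset (fun t => Finset.range (Function.update c i (c i - 1) t + 1)),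
            (((d₁ : ℚ) * ((d - d₁ : ℕ) : ℚ)
                - ∑ t, (c₁ t : ℚ) * ((Function.update c i (c i - 1) t - c₁ t : ℕ) : ℚ))
              * ((d₁ : ℚ) * ((d - d₁ : ℕ) : ℚ) * (c₁ i : ℚ)
                    * ((Function.update c i (c i - 1) i - c₁ i : ℕ) : ℚ)
                  - (d₁ : ℚ) ^ 2 * ((Function.update c i (c i - 1) i - c₁ i : ℕ) : ℚ) ^ 2)
              * binom (ell d c) (ell d₁ c₁)
              * Nj d₁ c₁ * Nj (d - d₁) (fun t => Function.update c i (c i - 1) t - c₁ t))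

/-- The conditions relating the genus 0 Gromov-Witten invariants of the blowups
`ℙ²_j` of `ℙ²`, `0 ≤ j ≤ k`, to those of `ℙ²`: compatibility with adding a blowup
point not on the curves, vanishing in negative dimensions, and the
Göttsche-Pandharipande recursion R(i). -/
def GoodBlow (k : ℕ) (NP2 : ℕ → ℚ) (N : (j : ℕ) → ℕ → (Fin j → ℕ) → ℚ) : Prop :=
  (∀ d : ℕ, 1 ≤ d → ∀ c : Fin 0 → ℕ, N 0 d c = NP2 d)
    ∧ (∀ j : ℕ, j < k → ∀ d : ℕ, 1 ≤ d → ∀ c : Fin j → ℕ,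
        N (j + 1) d (Fin.snoc c 0) = N j d c)
    ∧ (∀ j : ℕ, j ≤ k → ∀ d : ℕ, 1 ≤ d → ∀ c : Fin j → ℕ, ell d c < 0 → N j d c = 0)
    ∧ (∀ j : ℕ, j ≤ k → ∀ d : ℕ, 1 ≤ d → ∀ c : Fin j → ℕ, 0 ≤ ell d c →
        ∀ i : Fin j, 1 ≤ c i → GPrec (N j) d c i)

lemma zero_case (k : ℕ) (NP2 : ℕ → ℚ) (N : (j : ℕ) → ℕ → (Fin j → ℕ) → ℚ)
    (hN : GoodBlow k NP2 N) : ∀ j, j ≤ k → ∀ d, 1 ≤ d → N j d (fun _ => 0) = NP2 d := by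
  intro j
  induction j with
  | zero => intro _ d hd; exact hN.1 d hd _
  | succ j ih =>
    intro hjk d hd
    have hj : j < k := hjk
    have hsnoc : (fun _ => 0 : Fin (j+1) → ℕ) = Fin.snoc (fun _ => 0) 0 := by
      funext t
      refine t.lastCases ?_ ?_ <;> simp
    rw [hsnoc, hN.2.1 j hj d hd, ih (le_of_lt hj) d hd]

/-- There is at most one collection of functions `N^j : H_j → ℚ`, `0 ≤ j ≤ k`,
satisfying all the conditions of `GoodBlow`. -/
theorem stmt_12 (k : ℕ) (NP2 : ℕ → ℚ) (N N' : (j : ℕ) → ℕ → (Fin j → ℕ) → ℚ)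
    (hN : GoodBlow k NP2 N) (hN' : GoodBlow k NP2 N') :
    ∀ j : ℕ, j ≤ k → ∀ d : ℕ, 1 ≤ d → ∀ c : Fin j → ℕ, N j d c = N' j d c := by
  intro j hjk d
  induction d using Nat.strong_induction_on with
  | _ d ihd =>
  intro hd c
  have key : ∀ s : ℕ, ∀ c : Fin j → ℕ, (∑ i, c i) = s → N j d c = N' j d c := by
    intro s
    induction s using Nat.strong_induction_on with
    | _ s ihs =>
    intro c hcs
    by_cases hell : ell d c < 0
    · rw [hN.2.2.1 j hjk d hd c hell, hN'.2.2.1 j hjk d hd c hell]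
    · push_neg at hell
      rcases Nat.eq_zero_or_pos s with hs | hs
      · have hc0 : c = fun _ => 0 := by
          funext t
          have h0 : ∑ i, c i = 0 := by omega
          exact Finset.sum_eq_zero_iff.mp h0 t (Finset.mem_univ t)
        rw [hc0, zero_case k NP2 N hN j hjk d hd, ← zero_case k NP2 N' hN' j hjk d hd]
      · obtain ⟨i, hi⟩ : ∃ i, 1 ≤ c i := by
          by_contra h
          push_neg at h
          have h0 : ∑ i, c i = 0 := Finset.sum_eq_zero (fun i _ => by have := h i; omega)
          omega
        have h1 := hN.2.2.2 j hjk d hd c hell i hi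
        have h2 := hN'.2.2.2 j hjk d hd c hell i hi
        unfold GPrec at h1 h2
        have e1 : N j d (Function.update c i (c i - 1)) = N' j d (Function.update c i (c i - 1)) := by
          apply ihs (s - 1) (by omega)
          have hA : c i + ∑ x ∈ Finset.univ \ {i}, c x = ∑ x, c x := by
            rw [← Finset.erase_eq]
            exact Finset.add_sum_erase _ _ (Finset.mem_univ i)
          rw [Finset.sum_update_of_mem (Finset.mem_univ i)]
          omega
        have h3 : (d : ℚ) ^ 2 * (c i : ℚ) * N j d c = (d : ℚ) ^ 2 * (c i : ℚ) * N' j d c := by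
          rw [h1, h2, e1]
          congr 1
          apply Finset.sum_congr rfl
          intro d₁ hd₁
          rw [Finset.mem_Ico] at hd₁
          apply Finset.sum_congr rfl
          intro c₁ _
          rw [ihd d₁ hd₁.2 hd₁.1, ihd (d - d₁) (by omega) (by omega)]
        have hne : ((d : ℚ) ^ 2 * (c i : ℚ)) ≠ 0 := by
          have h4 : (0:ℚ) < (d : ℚ) := by exact_mod_cast hd
          have h5 : (0:ℚ) < (c i : ℚ) := by exact_mod_cast hi
          positivity
        exact mul_left_cancel₀ hne h3
  exact key (∑ i, c i) c rfl
end

section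
/- Let C assign a rational number C(m; d) to each pair of a finite tuple m of positive integers and an integer d ≥ 1, with C((2,2,3); 1) = 1. Suppose F, assigning a rational number F(m; d) to each such pair (with m possibly empty), satisfies: F is symmetric in the entries of m; the divisor relation F((1)⌢m; d) = d·F(m; d); F(m; d) = 0 whenever some entry of m is ≥ 4; F(m; d) = 0 whenever d ≡ k_d(m) (mod 2); recursions (R1) and (R2) with complex input C at all admissible (d, m); and F((3); 1) = −1. Then F((2); 1) = 0, F((2,2); 1) = −1, F((3,1); 1) = −1, and F((); 1) = 1. -/
open Finset

/-- The subtuple of a tuple `m` indexed (in increasing order) by a set `S`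
of positions. -/
def subt {α : Type*} (m : List α) (S : Finset (Fin m.length)) : List α :=
  (S.sort (· ≤ ·)).map m.get

/-- All entries of the tuple `m` are positive integers. -/
def posl (m : List ℕ) : Prop := ∀ x ∈ m, 0 < x

/-- For a degree `d` and a tuple `m = (m₁,…,m_l)`, the number
`k_d(m) = 2d + l − (m₁ + ⋯ + m_l)`. -/
def kd (d : ℕ) (m : List ℕ) : ℤ :=
  2 * (d : ℤ) + m.length - (m.sum : ℤ)

/-- The term `T₀ = −2^{l−2} d C(m⌢(3); d/2)` if `d` is even and `k_d(m) = 2`,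
and `0` otherwise; the power `2^{l−2}` is taken in `ℚ`. -/
def TP3 (C : List ℕ → ℕ → ℚ) (d : ℕ) (m : List ℕ) : ℚ :=
  if Even d ∧ kd d m = 2 then
    -((2 : ℚ) ^ ((m.length : ℤ) - 2)) * (d : ℚ) * C (m ++ [3]) (d / 2)
  else 0

/-- The WDVV-type recursion (R1) for the real invariants of `(ℙ³,τ₃)` at
`(d, m)` with `m = x :: t`:  the sums over `(I,J) ∈ P(l)` are encoded by the
subsets `S` of the positions of `t` that are placed in `I` (so `m_I = x :: t_S`,
`m_J = t_{Sᶜ}` and `|I| = |S| + 1`). -/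
def R1 (C F : List ℕ → ℕ → ℚ) (d : ℕ) (x : ℕ) (t : List ℕ) : Prop :=
  F ((x + 1) :: t) d =
    TP3 C d (x :: t)
    - ∑ p ∈ pairsHalf d, (p.2 : ℚ) *
        ∑ S : Finset (Fin t.length), (2 : ℚ) ^ S.card *
          ∑ i ∈ Finset.Icc 1 2,
            C ((x :: subt t S) ++ [i]) p.2 * F ((3 - i) :: subt t Sᶜ) p.1
    + ∑ q ∈ pairsSum d,
        ∑ S : Finset (Fin t.length),
          ((q.2 : ℚ) * binom (kd d (x :: t) - 2) (kd q.1 (x :: subt t S) - 1)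
            - (q.1 : ℚ) * binom (kd d (x :: t) - 2) (kd q.1 (x :: subt t S)))
          * F (x :: subt t S) q.1 * F (subt t Sᶜ) q.2

/-- The WDVV-type recursion (R2) for the real invariants of `(ℙ³,τ₃)` at
`(d, m)` with `m = x :: y :: t`: the sums over `(I,J) ∈ P_{;2}(l)` are encoded
by the subsets `S` of the positions of `t` placed in `I` (so `m_I = x :: t_S`,
`m_J = y :: t_{Sᶜ}`, `|I| = |S| + 1` and `|J| = |Sᶜ| + 1`). -/
def R2 (C F : List ℕ → ℕ → ℚ) (d : ℕ) (x y : ℕ) (t : List ℕ) : Prop :=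
  F (x :: (y + 1) :: t) d =
    F ((x + 1) :: y :: t) d
    + ∑ p ∈ pairsHalf d, (p.2 : ℚ) *
        ∑ S : Finset (Fin t.length),
          ∑ i ∈ Finset.Icc 1 2,
            ((2 : ℚ) ^ S.card * C ((x :: subt t S) ++ [i]) p.2
                * F ((3 - i) :: y :: subt t Sᶜ) p.1
              - (2 : ℚ) ^ (Sᶜ : Finset (Fin t.length)).card
                * C ((y :: subt t Sᶜ) ++ [3 - i]) p.2
                * F (i :: x :: subt t S) p.1)
    + ∑ q ∈ pairsSum d,
        ∑ S : Finset (Fin t.length),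
          ((q.1 : ℚ) * binom (kd d (x :: y :: t) - 1) (kd q.1 (x :: subt t S))
            - (q.2 : ℚ) * binom (kd d (x :: y :: t) - 1) (kd q.2 (y :: subt t Sᶜ)))
          * F (x :: subt t S) q.1 * F (y :: subt t Sᶜ) q.2


/-!
In degree 1 the needed relations carry no correction terms: parity kills `F((2);1)`, the divisor
relation and symmetry give `F((3,1);1) = F((3);1)`, and (R2) at `(1,(2,1))` has no splitting
terms, so `F((2,2);1) = F((3,1);1)`. The value `F(();1)` is then pinned down by computing
`F((3,2);2)` twice: (R2) at `(2,(3,1))` gives `−F(();1)` (the term `F((4,1);2)` vanishes), while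
(R1) at `(2,(2,2))` gives `−2 C((2,2,3);1) + F(();1)`, the closed contribution `T₀` entering here.
-/

lemma pairsHalf_one : pairsHalf 1 = ∅ := by decide

lemma pairsHalf_two : pairsHalf 2 = ∅ := by decide

lemma pairsSum_one : pairsSum 1 = ∅ := by decide

lemma pairsSum_two : pairsSum 2 = {(1, 1)} := by decide

@[simp]
lemma subt_empty {α : Type*} (m : List α) : subt m ∅ = [] := by
  simp [subt]

@[simp]
lemma subt_nil {α : Type*} (S : Finset (Fin ([] : List α).length)) : subt [] S = [] := by
  rw [Finset.eq_empty_of_forall_notMem (s := S) fun i _ => i.elim0, subt_empty]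

@[simp]
lemma subt_univ {α : Type*} (m : List α) : subt m univ = m := by
  rw [subt, Fin.sort_univ, List.map_get_finRange]

section Recursions

variable (C F : List ℕ → ℕ → ℚ)

lemma R2_one_iff (x y : ℕ) (t : List ℕ) :
    R2 C F 1 x y t ↔ F (x :: (y + 1) :: t) 1 = F ((x + 1) :: y :: t) 1 := by
  simp [R2, pairsHalf_one, pairsSum_one]

lemma R2_two_nil_iff (x y : ℕ) :
    R2 C F 2 x y [] ↔
      F [x, y + 1] 2 = F [x + 1, y] 2
        + (binom (kd 2 [x, y] - 1) (kd 1 [x]) - binom (kd 2 [x, y] - 1) (kd 1 [y]))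
          * F [x] 1 * F [y] 1 := by
  simp [R2, pairsHalf_two, pairsSum_two]

lemma R1_two_singleton_iff (x z : ℕ) :
    R1 C F 2 x [z] ↔
      F [x + 1, z] 2 = TP3 C 2 [x, z]
        + (binom (kd 2 [x, z] - 2) (kd 1 [x] - 1) - binom (kd 2 [x, z] - 2) (kd 1 [x]))
          * F [x] 1 * F [z] 1
        + (binom (kd 2 [x, z] - 2) (kd 1 [x, z] - 1) - binom (kd 2 [x, z] - 2) (kd 1 [x, z]))
          * F [x, z] 1 * F [] 1 := by
  have huniv : (univ : Finset (Finset (Fin 1))) = {∅, {0}} := by decide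
  have hcompl : ({0} : Finset (Fin 1))ᶜ = ∅ := by decide
  have hsubt_empty : subt [z] ∅ = [] := subt_empty _
  have hsubt_zero : subt [z] {0} = [z] := subt_univ _
  simp [R1, pairsHalf_two, pairsSum_two, huniv, hcompl, hsubt_empty, hsubt_zero, add_assoc]

end Recursions

lemma TP3_two_two_two (C : List ℕ → ℕ → ℚ) : TP3 C 2 [2, 2] = -2 * C [2, 2, 3] 1 := by
  norm_num [TP3, kd]

/-- The WDVV-type relations for `(ℙ³,τ₃)` together with the single input
`⟨3⟩₁ = −1` determine the degree 1 real invariants. -/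
theorem stmt_14 (C F : List ℕ → ℕ → ℚ)
    (hC : C [2, 2, 3] 1 = 1)
    (hsym : ∀ d : ℕ, 1 ≤ d → ∀ m m' : List ℕ, posl m → m.Perm m' → F m d = F m' d)
    (hdiv : ∀ d : ℕ, 1 ≤ d → ∀ m : List ℕ, posl m → F (1 :: m) d = (d : ℚ) * F m d)
    (hbig : ∀ d : ℕ, 1 ≤ d → ∀ m : List ℕ, posl m → (∃ x ∈ m, 4 ≤ x) → F m d = 0)
    (hpar : ∀ d : ℕ, 1 ≤ d → ∀ m : List ℕ, posl m →
      (d : ℤ) % 2 = kd d m % 2 → F m d = 0)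
    (hR1 : ∀ d : ℕ, 1 ≤ d → ∀ (x : ℕ) (t : List ℕ), posl (x :: t) →
      2 ≤ kd d (x :: t) → R1 C F d x t)
    (hR2 : ∀ d : ℕ, 1 ≤ d → ∀ (x y : ℕ) (t : List ℕ), posl (x :: y :: t) →
      1 ≤ kd d (x :: y :: t) → R2 C F d x y t)
    (h31 : F [3] 1 = -1) :
    F [2] 1 = 0 ∧ F [2, 2] 1 = -1 ∧ F [3, 1] 1 = -1 ∧ F [] 1 = 1 := by
  have hF2 : F [2] 1 = 0 := hpar 1 le_rfl [2] (by simp [posl]) (by decide)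
  have hF31 : F [3, 1] 1 = -1 := by
    rw [hsym 1 le_rfl [3, 1] [1, 3] (by simp [posl]) (by decide),
      hdiv 1 le_rfl [3] (by simp [posl]), h31]
    norm_num
  have hF22 : F [2, 2] 1 = -1 := by
    rw [← hF31,
      ← (R2_one_iff C F 2 1 []).1 (hR2 1 le_rfl 2 1 [] (by simp [posl]) (by decide))]
  have hF1 : F [1] 1 = F [] 1 := by
    simpa using hdiv 1 le_rfl [] (by simp [posl])
  have hR2_eval : F [3, 2] 2 = -F [] 1 := by
    have h := (R2_two_nil_iff C F 3 1).1
      (hR2 2 (by norm_num) 3 1 [] (by simp [posl]) (by decide))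
    have h41 : F [4, 1] 2 = 0 :=
      hbig 2 (by norm_num) [4, 1] (by simp [posl]) ⟨4, by simp, le_rfl⟩
    rw [show binom (kd 2 [3, 1] - 1) (kd 1 [3]) = 1 by decide,
      show binom (kd 2 [3, 1] - 1) (kd 1 [1]) = 0 by decide, h41, h31, hF1] at h
    linarith
  have hR1_eval : F [3, 2] 2 = -2 + F [] 1 := by
    have h := (R1_two_singleton_iff C F 2 2).1
      (hR1 2 (by norm_num) 2 [2] (by simp [posl]) (by decide))
    rw [TP3_two_two_two, hC, hF2, hF22,
      show binom (kd 2 [2, 2] - 2) (kd 1 [2, 2] - 1) = 0 by decide,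
      show binom (kd 2 [2, 2] - 2) (kd 1 [2, 2]) = 1 by decide] at h
    linarith
  exact ⟨hF2, hF22, hF31, by linarith⟩
end

section
/- Let C assign a rational number C(m; d) to each pair of a finite tuple m of elements of (ℤ^{≥0})³∖{0} and a nonzero d ∈ (ℤ^{≥0})³. Then there is at most one F, assigning a rational number F(m; d) to each pair of a (possibly empty) finite tuple m of elements of (ℤ^{≥0})³∖{0} and a nonzero d ∈ (ℤ^{≥0})³, such that: F is invariant under every simultaneous permutation of the three coordinates of d and of all entries mᵢ; F satisfies the divisor relation F((e_s)⌢m; d) = d_s·F(m; d) for s = 1,2,3; F(m; d) = 0 whenever some mᵢ has a coordinate ≥ 2; F(m; d) = 0 whenever k_d(m) is even; F(m; d) = 0 whenever k_d(m) < 0; F((); e_s) = 1 for s = 1,2,3; F((); (1,1,1)) = −1; F satisfies recursion (A) with complex input C at all admissible (r,d,m); and, for every r ∈ {1,2,3} and every d ∈ (ℤ^{≥0})³∖{0, e_r}, (|d|−1−2d_r)·F((); d) = Σ_{d′,d″ ∈ (ℤ^{≥0})³, |d′| ≥ 2, |d″| ≥ 2, d′+d″=d+e_r} d′_r ( d″_r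 C(|d|−1, |d′|−1) − d′_r C(|d|−1, |d′|) ) F((); d′) F((); d″). That is, any two such F agree everywhere. -/
/-!
Induction on `|d|`, and for fixed `d` on the length of `m`. For `m = ()` the degrees `e_s` and
`𝟏` are base values; for any other `d` some coefficient `|d| − 1 − 2 d_r` is nonzero, and the
quadratic relation then expresses `F((); d)` through `F((); d′)` with `|d′| ≥ 2`, `|d″| ≥ 2`,
`d′ + d″ = d + e_r`, hence `|d′|, |d″| < |d|`. For `m = v :: t` with `|v| = 1` the divisor relation
reduces to `t`. If `|v| ≥ 2`, write `v = x + e_r` with `x ≠ 0`; unless `F(m; d)` vanishes by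
parity or negativity of `k_d(m)`, we get `k_d(x :: t) = k_d(m) + 1 ≥ 2`, and recursion (A)
expresses `F(m; d)` through `C` and values of `F` in the degrees `d − 2d′`, `d′` and `d − d′`,
all of smaller norm.
-/

open Finset

/-- Elements of `(ℤ^{≥0})³`. -/
abbrev V3 := Fin 3 → ℕ

/-- `|d| = d₁ + d₂ + d₃`. -/
def nrm (v : V3) : ℕ := ∑ i, v i

/-- The vector `𝟏 = (1,1,1)`. -/
def oneV : V3 := fun _ => 1

/-- All entries of the tuple `m` lie in `(ℤ^{≥0})³ ∖ {0}`. -/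
def posV (m : List V3) : Prop := ∀ v ∈ m, v ≠ 0

/-- For `d ∈ (ℤ^{≥0})³` and a tuple `m = (m₁,…,m_l)` of elements of `(ℤ^{≥0})³`,
the number `k_d(m) = |d| + l − (|m₁| + ⋯ + |m_l|)`. -/
def kd3 (d : V3) (m : List V3) : ℤ :=
  (nrm d : ℤ) + m.length - ((m.map nrm).sum : ℤ)

/-- Vectors `d'` with `d'' + 2d' = d` for some `d''`, `d' ≠ 0`, `d'' ≠ 0`. -/
def halfVec (d : V3) : Finset V3 :=
  (Fintype.piFinset fun i => Finset.range (d i + 1)).filter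
    fun d' => (∀ i, 2 * d' i ≤ d i) ∧ d' ≠ 0 ∧ (fun i => d i - 2 * d' i) ≠ (0 : V3)

/-- Vectors `d'` with `d' + d'' = d` for some `d''`, `d' ≠ 0`, `d'' ≠ 0`. -/
def splitVec (d : V3) : Finset V3 :=
  (Fintype.piFinset fun i => Finset.range (d i + 1)).filter
    fun d' => d' ≠ 0 ∧ (fun i => d i - d' i) ≠ (0 : V3)

/-- The nonzero vectors `i ∈ (ℤ^{≥0})³` with `𝟏 − i` nonzero. -/
def unitsV : Finset V3 :=
  (Fintype.piFinset fun _ => Finset.range 2).filter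
    fun i => i ≠ 0 ∧ i ≠ oneV

/-- The term `T₀ = −2^{l−2} d_r C(m⌢(𝟏); d/2)` if all three coordinates of `d`
are even and `k_d(m) = 2`, and `0` otherwise; the power `2^{l−2}` is taken
in `ℚ`. -/
def TA (C : List V3 → V3 → ℚ) (d : V3) (r : Fin 3) (m : List V3) : ℚ :=
  if (∀ i, Even (d i)) ∧ kd3 d m = 2 then
    -((2 : ℚ) ^ ((m.length : ℤ) - 2)) * (d r : ℚ) * C (m ++ [oneV]) (fun i => d i / 2)
  else 0

/-- The WDVV-type recursion (A) for the real invariants of `((ℙ¹)³, φ₃)` at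
`(r, d, m)` with `m = x :: t`: the sums over `(I,J) ∈ P(l)` are encoded by the
subsets `S` of the positions of `t` placed in `I` (so `m_I = x :: t_S`,
`m_J = t_{Sᶜ}` and `|I| = |S| + 1`). -/
def RecA (C F : List V3 → V3 → ℚ) (r : Fin 3) (d : V3) (x : V3) (t : List V3) : Prop :=
  F ((x + Pi.single r 1) :: t) d =
    TA C d r (x :: t)
    - ∑ d' ∈ halfVec d, (d' r : ℚ) *
        ∑ S : Finset (Fin t.length), (2 : ℚ) ^ S.card *
          ∑ i ∈ unitsV,
            C ((x :: subt t S) ++ [i]) d'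
              * F ((fun s => 1 - i s) :: subt t Sᶜ) (fun s => d s - 2 * d' s)
    + ∑ d' ∈ splitVec d,
        ∑ S : Finset (Fin t.length),
          (((d r - d' r : ℕ) : ℚ) * binom (kd3 d (x :: t) - 2) (kd3 d' (x :: subt t S) - 1)
            - (d' r : ℚ) * binom (kd3 d (x :: t) - 2) (kd3 d' (x :: subt t S)))
          * F (x :: subt t S) d' * F (subt t Sᶜ) (fun s => d s - d' s)

/-- The full set of conditions on the real genus 0 invariants `F(m; d)` of
`((ℙ¹)³, φ₃)`: invariance under simultaneous coordinate permutations, the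
divisor relation, the vanishing statements, the base values, the recursion (A),
and the quadratic relation for the purely real point-counting invariants. -/
def GoodProd (C F : List V3 → V3 → ℚ) : Prop :=
  (∀ σ : Equiv.Perm (Fin 3), ∀ d : V3, d ≠ 0 → ∀ m : List V3, posV m →
      F (m.map fun v => v ∘ σ) (d ∘ σ) = F m d)
    ∧ (∀ s : Fin 3, ∀ d : V3, d ≠ 0 → ∀ m : List V3, posV m →
        F (Pi.single s 1 :: m) d = (d s : ℚ) * F m d)
    ∧ (∀ d : V3, d ≠ 0 → ∀ m : List V3, posV m →
        (∃ v ∈ m, ∃ i : Fin 3, 2 ≤ v i) → F m d = 0)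
    ∧ (∀ d : V3, d ≠ 0 → ∀ m : List V3, posV m → kd3 d m % 2 = 0 → F m d = 0)
    ∧ (∀ d : V3, d ≠ 0 → ∀ m : List V3, posV m → kd3 d m < 0 → F m d = 0)
    ∧ (∀ s : Fin 3, F [] (Pi.single s 1) = 1)
    ∧ F [] oneV = -1
    ∧ (∀ (r : Fin 3) (d : V3) (x : V3) (t : List V3), d ≠ 0 → posV (x :: t) →
        2 ≤ kd3 d (x :: t) → RecA C F r d x t)
    ∧ (∀ (r : Fin 3) (d : V3), d ≠ 0 → d ≠ Pi.single r 1 →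
        ((nrm d : ℚ) - 1 - 2 * (d r : ℚ)) * F [] d =
          ∑ d' ∈ (Fintype.piFinset fun i => Finset.range ((d + Pi.single r 1 : V3) i + 1)).filter
              (fun d' => 2 ≤ nrm d' ∧ 2 ≤ nrm (fun i => (d + Pi.single r 1 : V3) i - d' i)),
            (d' r : ℚ)
              * ((((d + Pi.single r 1 : V3) r - d' r : ℕ) : ℚ)
                    * binom ((nrm d : ℤ) - 1) ((nrm d' : ℤ) - 1)
                  - (d' r : ℚ) * binom ((nrm d : ℤ) - 1) (nrm d' : ℤ))
              * F [] d' * F [] (fun i => (d + Pi.single r 1 : V3) i - d' i))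

lemma nrm_eq_zero_iff {d : V3} : nrm d = 0 ↔ d = 0 := by
  simp [nrm, Finset.sum_eq_zero_iff, funext_iff]

lemma nrm_pos_iff {d : V3} : 0 < nrm d ↔ d ≠ 0 := by
  rw [Nat.pos_iff_ne_zero, Ne, nrm_eq_zero_iff]

lemma nrm_add_single (x : V3) (r : Fin 3) : nrm (x + Pi.single r 1) = nrm x + 1 := by
  simp [nrm, Finset.sum_add_distrib]

lemma nrm_add_nrm_sub {d d' : V3} (h : ∀ i, d' i ≤ d i) :
    nrm d' + nrm (fun i => d i - d' i) = nrm d := by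
  simp only [nrm, ← Finset.sum_add_distrib]
  exact Finset.sum_congr rfl fun i _ => Nat.add_sub_of_le (h i)

lemma two_mul_nrm_add_nrm_sub {d d' : V3} (h : ∀ i, 2 * d' i ≤ d i) :
    2 * nrm d' + nrm (fun i => d i - 2 * d' i) = nrm d := by
  simp only [nrm, Finset.mul_sum, ← Finset.sum_add_distrib]
  exact Finset.sum_congr rfl fun i _ => Nat.add_sub_of_le (h i)

lemma exists_eq_single_of_nrm_eq_one {v : V3} (h : nrm v = 1) : ∃ s, v = Pi.single s 1 := by
  have h012 : v 0 + v 1 + v 2 = 1 := by simpa [nrm, Fin.sum_univ_three] using h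
  obtain ⟨s, hs⟩ : ∃ s, v s = 1 := by
    by_contra! hc
    have := hc 0; have := hc 1; have := hc 2; omega
  refine ⟨s, funext fun i => ?_⟩
  fin_cases s <;> fin_cases i <;> simp_all <;> omega

lemma exists_eq_add_single_of_two_le_nrm {v : V3} (h : 2 ≤ nrm v) :
    ∃ (x : V3) (r : Fin 3), x ≠ 0 ∧ v = x + Pi.single r 1 := by
  obtain ⟨r, hr⟩ : ∃ r, v r ≠ 0 := by
    by_contra! hv
    simp [nrm, hv] at h
  set x := Function.update v r (v r - 1)
  have hv : v = x + Pi.single r 1 := funext fun i => by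
    rcases eq_or_ne i r with rfl | hi
    · simp [x]; omega
    · simp [x, hi]
  refine ⟨x, r, nrm_pos_iff.mp ?_, hv⟩
  have := nrm_add_single x r
  rw [← hv] at this
  omega

/-- For `d ≠ 𝟏` the coefficient `|d| − 1 − 2 d_r` of the quadratic relation is nonzero for
some `r`. -/
lemma exists_two_mul_add_one_ne_nrm {d : V3} (h : d ≠ oneV) : ∃ r, 2 * d r + 1 ≠ nrm d := by
  by_contra! hd
  have hn : nrm d = d 0 + d 1 + d 2 := by simp [nrm, Fin.sum_univ_three]
  have := hd 0; have := hd 1; have := hd 2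
  exact h (funext fun i => by fin_cases i <;> simp [oneV] <;> omega)

lemma kd3_cons (d v : V3) (t : List V3) : kd3 d (v :: t) = kd3 d t + 1 - nrm v := by
  simp only [kd3, List.map_cons, List.sum_cons, List.length_cons]
  push_cast; ring

lemma posV_nil : posV [] := fun _ h => nomatch h

lemma posV_cons {v : V3} {t : List V3} : posV (v :: t) ↔ v ≠ 0 ∧ posV t := by
  simp [posV]

lemma posV.subt {m : List V3} (hm : posV m) (S : Finset (Fin m.length)) : posV (subt m S) := by
  intro u hu
  simp only [_root_.subt, List.mem_map] at hu
  obtain ⟨j, _, rfl⟩ := hu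
  exact hm _ (m.get_mem j)

lemma one_sub_ne_zero_of_mem_unitsV {i : V3} (hi : i ∈ unitsV) : (fun s => 1 - i s) ≠ 0 := by
  simp only [unitsV, Finset.mem_filter, Fintype.mem_piFinset, Finset.mem_range] at hi
  obtain ⟨hlt, -, hone⟩ := hi
  obtain ⟨s, hs⟩ := Function.ne_iff.mp hone
  refine Function.ne_iff.mpr ⟨s, ?_⟩
  have := hlt s
  simp only [oneV] at hs
  simp only [Pi.zero_apply]
  omega

lemma nrm_sub_two_mul_lt_of_mem_halfVec {d d' : V3} (h : d' ∈ halfVec d) :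
    nrm (fun i => d i - 2 * d' i) < nrm d := by
  simp only [halfVec, Finset.mem_filter] at h
  have := two_mul_nrm_add_nrm_sub h.2.1
  have := nrm_pos_iff.mpr h.2.2.1
  omega

lemma nrm_lt_of_mem_splitVec {d d' : V3} (h : d' ∈ splitVec d) : nrm d' < nrm d := by
  simp only [splitVec, Finset.mem_filter, Fintype.mem_piFinset, Finset.mem_range] at h
  have := nrm_add_nrm_sub fun i => Nat.lt_succ_iff.mp (h.1 i)
  have := nrm_pos_iff.mpr h.2.2
  omega

lemma nrm_sub_lt_of_mem_splitVec {d d' : V3} (h : d' ∈ splitVec d) :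
    nrm (fun i => d i - d' i) < nrm d := by
  simp only [splitVec, Finset.mem_filter, Fintype.mem_piFinset, Finset.mem_range] at h
  have := nrm_add_nrm_sub fun i => Nat.lt_succ_iff.mp (h.1 i)
  have := nrm_pos_iff.mpr h.2.1
  omega

namespace GoodProd

variable {C F F' : List V3 → V3 → ℚ}

lemma nil_eq_of_agree_below (hF : GoodProd C F) (hF' : GoodProd C F') {d : V3} (hd : d ≠ 0)
    (below : ∀ d', d' ≠ 0 → nrm d' < nrm d → F [] d' = F' [] d') : F [] d = F' [] d := by
  obtain ⟨-, -, -, -, -, unit, one, -, quad⟩ := hF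
  obtain ⟨-, -, -, -, -, unit', one', -, quad'⟩ := hF'
  by_cases hs : ∃ s, d = Pi.single s 1
  · obtain ⟨s, rfl⟩ := hs
    rw [unit, unit']
  by_cases ho : d = oneV
  · rw [ho, one, one']
  obtain ⟨r, hr⟩ := exists_two_mul_add_one_ne_nrm ho
  have hdr : d ≠ Pi.single r 1 := fun h => hs ⟨r, h⟩
  have hco : (nrm d : ℚ) - 1 - 2 * (d r : ℚ) ≠ 0 := by
    intro h
    have : ((2 * d r + 1 : ℕ) : ℚ) = nrm d := by push_cast; linarith
    exact hr (by exact_mod_cast this)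
  refine mul_left_cancel₀ hco ((quad r d hd hdr).trans (Eq.trans ?_ (quad' r d hd hdr).symm))
  refine Finset.sum_congr rfl fun d' hd' => ?_
  simp only [Finset.mem_filter, Fintype.mem_piFinset, Finset.mem_range] at hd'
  obtain ⟨hle, h₁, h₂⟩ := hd'
  have hsum := nrm_add_nrm_sub fun i => Nat.lt_succ_iff.mp (hle i)
  rw [nrm_add_single] at hsum
  rw [below d' (nrm_pos_iff.mp (by omega)) (by omega),
    below _ (nrm_pos_iff.mp (by omega)) (by omega)]

lemma cons_add_single_eq_of_agree_below (hF : GoodProd C F) (hF' : GoodProd C F')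
    {d x : V3} {t : List V3} (r : Fin 3) (hd : d ≠ 0) (hxt : posV (x :: t))
    (hk : 2 ≤ kd3 d (x :: t))
    (below : ∀ d', d' ≠ 0 → nrm d' < nrm d → ∀ m, posV m → F m d' = F' m d') :
    F ((x + Pi.single r 1) :: t) d = F' ((x + Pi.single r 1) :: t) d := by
  obtain ⟨hx, ht⟩ := posV_cons.mp hxt
  have ⟨_, _, _, _, _, _, _, recA, _⟩ := hF
  have ⟨_, _, _, _, _, _, _, recA', _⟩ := hF'
  rw [recA r d x t hd hxt hk, recA' r d x t hd hxt hk]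
  congr 1
  · refine congrArg _ <| Finset.sum_congr rfl fun d' hd' => congrArg _ <|
      Finset.sum_congr rfl fun S _ => congrArg _ <| Finset.sum_congr rfl fun i hi => congrArg _ ?_
    exact below _ (Finset.mem_filter.mp hd').2.2.2 (nrm_sub_two_mul_lt_of_mem_halfVec hd') _
      (posV_cons.mpr ⟨one_sub_ne_zero_of_mem_unitsV hi, ht.subt Sᶜ⟩)
  · refine Finset.sum_congr rfl fun d' hd' => ?_
    refine Finset.sum_congr rfl fun S _ => ?_
    have hmem := (Finset.mem_filter.mp hd').2
    rw [below d' hmem.1 (nrm_lt_of_mem_splitVec hd') _ (posV_cons.mpr ⟨hx, ht.subt S⟩),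
      below _ hmem.2 (nrm_sub_lt_of_mem_splitVec hd') _ (ht.subt Sᶜ)]

lemma cons_eq_of_agree_below (hF : GoodProd C F) (hF' : GoodProd C F') {d v : V3} {t : List V3}
    (hd : d ≠ 0) (hvt : posV (v :: t))
    (below : ∀ d', d' ≠ 0 → nrm d' < nrm d → ∀ m, posV m → F m d' = F' m d')
    (ht : F t d = F' t d) : F (v :: t) d = F' (v :: t) d := by
  have ⟨_, div, _, evn, neg, _⟩ := hF
  have ⟨_, div', _, evn', neg', _⟩ := hF'
  obtain ⟨hv, htpos⟩ := posV_cons.mp hvt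
  obtain h1 | h2 : nrm v = 1 ∨ 2 ≤ nrm v := by have := nrm_pos_iff.mpr hv; omega
  · obtain ⟨s, rfl⟩ := exists_eq_single_of_nrm_eq_one h1
    rw [div s d hd t htpos, div' s d hd t htpos, ht]
  obtain ⟨x, r, hx, rfl⟩ := exists_eq_add_single_of_two_le_nrm h2
  have hk : kd3 d (x :: t) = kd3 d ((x + Pi.single r 1) :: t) + 1 := by
    simp only [kd3_cons, nrm_add_single]
    push_cast
    ring
  by_cases hneg : kd3 d ((x + Pi.single r 1) :: t) < 0
  · rw [neg d hd _ hvt hneg, neg' d hd _ hvt hneg]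
  by_cases hev : kd3 d ((x + Pi.single r 1) :: t) % 2 = 0
  · rw [evn d hd _ hvt hev, evn' d hd _ hvt hev]
  exact cons_add_single_eq_of_agree_below hF hF' r hd (posV_cons.mpr ⟨hx, htpos⟩) (by omega) below

lemma eq_of_agree_below (hF : GoodProd C F) (hF' : GoodProd C F') {d : V3} (hd : d ≠ 0)
    (below : ∀ d', d' ≠ 0 → nrm d' < nrm d → ∀ m, posV m → F m d' = F' m d') :
    ∀ m, posV m → F m d = F' m d
  | [], _ => nil_eq_of_agree_below hF hF' hd fun d' hd' hlt => below d' hd' hlt [] posV_nil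
  | _ :: t, hm => cons_eq_of_agree_below hF hF' hd hm below
      (eq_of_agree_below hF hF' hd below t (posV_cons.mp hm).2)

end GoodProd

/-- There is at most one function `F` on pairs of a tuple of nonzero vectors and
a nonzero degree satisfying all the conditions of `GoodProd`. -/
theorem stmt_18 (C F F' : List V3 → V3 → ℚ)
    (hF : GoodProd C F) (hF' : GoodProd C F') :
    ∀ d : V3, d ≠ 0 → ∀ m : List V3, posV m → F m d = F' m d := by
  intro d
  induction h : nrm d using Nat.strong_induction_on generalizing d with
  | _ n ih =>
    intro hd
    exact hF.eq_of_agree_below hF' hd fun d' hd' hlt => ih _ (h ▸ hlt) d' rfl hd'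
end
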